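/- Let n ≥ 2 and let σ, τ be wire diagrams on n wires with σ ≤ τ in P_n^* (equivalently, τ ≤ σ in P_n). Then S(σ) ≤lex S(τ). -/

import Mathlib

/-! A nesting uncrossing of a crossing `a < c < b < d` leaves the first endpoints unchanged,
while a disjoint uncrossing replaces the first endpoint `c` by `b > c`, which makes the increasing
enumeration of the start set lexicographically larger. Hence every cover of `P_n^*` weakly raises
the start set, and so does every chain of covers. -/

open Equiv Finset

/-- A candidate wire diagram: a permutation of the `2 n` endpoint positions. -/
abbrev WDperm (n : ℕ) := Equiv.Perm (Fin (2 * n))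

/-- `σ` is a wire diagram on `n` wires: a fixed-point-free involution of the `2 n` positions. -/
def IsWD {n : ℕ} (σ : WDperm n) : Prop := (∀ x, σ (σ x) = x) ∧ ∀ x, σ x ≠ x

instance IsWD.decPred {n : ℕ} : DecidablePred (@IsWD n) := fun σ => by
  unfold IsWD; infer_instance

/-- Positions `a < c` are first endpoints of a pair of crossing wires `{a, σ a}`, `{c, σ c}`,
i.e. `a < c < σ a < σ c`. -/
def IsCrossing {n : ℕ} (σ : WDperm n) (a c : Fin (2 * n)) : Prop :=
  a < c ∧ c < σ a ∧ σ a < σ c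

instance IsCrossing.dec {n : ℕ} (σ : WDperm n) (a c : Fin (2 * n)) :
    Decidable (IsCrossing σ a c) := by unfold IsCrossing; infer_instance

/-- The number `c(σ)` of crossings of `σ`. -/
def ncross {n : ℕ} (σ : WDperm n) : ℕ :=
  (Finset.univ.filter (fun p : Fin (2 * n) × Fin (2 * n) => IsCrossing σ p.1 p.2)).card

/-- The nesting uncrossing of the crossing `{a, σ a}, {c, σ c}` (with `a < c < σ a < σ c`):
replace the pairs `{a,b},{c,d}` by `{a,d},{b,c}` where `b = σ a`, `d = σ c`. -/
def nestU {n : ℕ} (σ : WDperm n) (a c : Fin (2 * n)) : WDperm n :=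
  Equiv.swap (σ a) (σ c) * σ * Equiv.swap (σ a) (σ c)

/-- The disjoint uncrossing: replace the pairs `{a,b},{c,d}` by `{a,c},{b,d}`. -/
def disjU {n : ℕ} (σ : WDperm n) (a c : Fin (2 * n)) : WDperm n :=
  Equiv.swap (σ a) c * σ * Equiv.swap (σ a) c

/-- `τ` is obtained from `σ` by a nesting uncrossing of some crossing of `σ`. -/
def IsNestStep {n : ℕ} (σ τ : WDperm n) : Prop := ∃ a c, IsCrossing σ a c ∧ τ = nestU σ a c

/-- `τ` is obtained from `σ` by a disjoint uncrossing of some crossing of `σ`. -/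
def IsDisjStep {n : ℕ} (σ τ : WDperm n) : Prop := ∃ a c, IsCrossing σ a c ∧ τ = disjU σ a c

/-- `τ` is obtained from `σ` by an uncrossing step that decreases the crossing number by one. -/
def UncCov {n : ℕ} (σ τ : WDperm n) : Prop :=
  (IsNestStep σ τ ∨ IsDisjStep σ τ) ∧ ncross τ + 1 = ncross σ

/-- The dual uncrossing poset `P_n^*`: wire diagrams together with a top element `none = 1̂`
(the adjoined element `0̂` of `P_n`). -/
abbrev PStar (n : ℕ) := Option {σ : WDperm n // IsWD σ}

/-- The covering relation of `P_n^*`. -/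
def Cov {n : ℕ} : PStar n → PStar n → Prop
  | some σ, some τ => UncCov σ.1 τ.1
  | some σ, none => ncross σ.1 = 0
  | none, _ => False

/-- The partial order of `P_n^*`: reflexive-transitive closure of the covering relation. -/
def ple {n : ℕ} : PStar n → PStar n → Prop := Relation.ReflTransGen Cov

/-- The (0-indexed) name `w(σ)(x)` of the wire through position `x`: the number of wires whose
first endpoint is strictly smaller than the first endpoint of the wire through `x`. -/
def word {n : ℕ} (σ : WDperm n) (x : Fin (2 * n)) : ℕ :=
  (Finset.univ.filter (fun a : Fin (2 * n) => a < σ a ∧ a < min x (σ x))).card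

/-- The start set `S(σ)`: the set of first endpoints of wires of `σ`. -/
def startSet {n : ℕ} (σ : WDperm n) : Finset (Fin (2 * n)) :=
  Finset.univ.filter (fun a => a < σ a)

/-- The noncrossing pair set `N(σ)` (on 0-indexed wire names): `(i, j)` with `i < j` for each
nested pair of wires `i < j`, and `(j, i)` for each disjoint pair of wires `i < j`. -/
def NPairs {n : ℕ} (σ : WDperm n) : Set (ℕ × ℕ) :=
  {p | ∃ a c : Fin (2 * n), a < σ a ∧ c < σ c ∧ a < c ∧
        ((σ c < σ a ∧ p = (word σ a, word σ c)) ∨ (σ a < c ∧ p = (word σ c, word σ a)))}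

/-- Lexicographic comparison of finsets via their increasing enumerations. -/
def finsetLexLE {m : ℕ} (A B : Finset (Fin m)) : Prop :=
  A = B ∨ List.Lex (· < ·) (A.sort (· ≤ ·)) (B.sort (· ≤ ·))

/-- Labels of the edge labeling: ordered pairs of (0-indexed) wire names, and a label `L`. -/
inductive Lbl where
  | pair : ℕ → ℕ → Lbl
  | L : Lbl
deriving DecidableEq

/-- The total order `<λ` on labels. -/
def lblLT : Lbl → Lbl → Prop
  | .pair i j, .pair i' j' =>
      if i < j then (if i' < j' then i < i' ∨ (i = i' ∧ j < j') else True)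
      else (if i' < j' then False else (j' < j ∨ (j = j' ∧ i' < i)))
  | .pair i j, .L => i < j
  | .L, .pair r s => s < r
  | .L, .L => False

/-- `≤λ` on labels. -/
def lblLE (p q : Lbl) : Prop := p = q ∨ lblLT p q

/-- The sorted list of positions where `σ` and `τ` differ. -/
def diffList {n : ℕ} (σ τ : WDperm n) : List (Fin (2 * n)) :=
  (Finset.univ.filter (fun x => σ x ≠ τ x)).sort (· ≤ ·)

/-- The edge labeling `λ` of `P_n^*`: an uncrossing of the crossing formed by wires `k < m`
of the lower diagram gets label `(k, m)` if it is the nesting uncrossing and `(m, k)` if it is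
the disjoint uncrossing; covers of the top element `1̂ = none` get the label `L`. -/
def lbl {n : ℕ} : PStar n → PStar n → Lbl
  | some σ, some τ =>
      match (diffList σ.1 τ.1)[0]?, (diffList σ.1 τ.1)[1]? with
      | some a, some c =>
          if τ.1 a = σ.1 c then Lbl.pair (word σ.1 a) (word σ.1 c)
          else Lbl.pair (word σ.1 c) (word σ.1 a)
      | _, _ => Lbl.L
  | _, _ => Lbl.L

/-- `c` is a saturated chain from `u` to `v` in `P_n^*`. -/
def SatChain {n : ℕ} (c : List (PStar n)) (u v : PStar n) : Prop :=
  c.Chain' Cov ∧ c.head? = some u ∧ c.getLast? = some v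

/-- The label sequence of a saturated chain. -/
def chainLabels {n : ℕ} (c : List (PStar n)) : List Lbl := c.zipWith lbl c.tail

/-- Lexicographic order on pairs of labels. -/
def pairLexLT (p q : Lbl × Lbl) : Prop := lblLT p.1 q.1 ∨ (p.1 = q.1 ∧ lblLT p.2 q.2)

/-- `x ⋖ y ⋖ z` is a topological ascent: its label pair is lexicographically strictly smaller
than the label pair of every other saturated chain from `x` to `z`. -/
def TopAscent {n : ℕ} (x y z : PStar n) : Prop :=
  Cov x y ∧ Cov y z ∧ ∀ y' : PStar n, Cov x y' → Cov y' z → y' ≠ y →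
    pairLexLT (lbl x y, lbl y z) (lbl x y', lbl y' z)

/-- `x ⋖ y ⋖ z` is a topological descent: a length-two chain that is not a topological ascent. -/
def TopDescent {n : ℕ} (x y z : PStar n) : Prop := Cov x y ∧ Cov y z ∧ ¬ TopAscent x y z

/-- Every length-two subchain of `c` is a topological ascent. -/
def AllTopAscents {n : ℕ} (c : List (PStar n)) : Prop :=
  ∀ x y z : PStar n, [x, y, z] <:+: c → TopAscent x y z

/-- The number of inversions of a permutation. -/
def numInv {n : ℕ} (π : Equiv.Perm (Fin n)) : ℕ :=
  (Finset.univ.filter (fun p : Fin n × Fin n => p.1 < p.2 ∧ π p.2 < π p.1)).card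

/-- One step of the Bruhat order: left multiplication by a transposition raising `inv` by one. -/
def BruhatStep {n : ℕ} (u v : Equiv.Perm (Fin n)) : Prop :=
  (∃ a b : Fin n, a ≠ b ∧ v = Equiv.swap a b * u) ∧ numInv v = numInv u + 1

/-- The Bruhat order on `S_n`. -/
def BruhatLE {n : ℕ} : Equiv.Perm (Fin n) → Equiv.Perm (Fin n) → Prop :=
  Relation.ReflTransGen BruhatStep

/-- The set of second endpoints of wires of `σ`. -/
def secondEnds {n : ℕ} (σ : WDperm n) : Finset (Fin (2 * n)) :=
  Finset.univ.filter (fun b => σ b < b)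

/-- The wire name at the `t`-th (0-indexed) second endpoint. -/
def piVal {n : ℕ} (σ : WDperm n) (t : ℕ) : ℕ :=
  (((secondEnds σ).sort (· ≤ ·))[t]?).elim 0 (word σ)

open Classical in
/-- The permutation `π(σ) ∈ S_n` reading the wire names at the second endpoints of `σ` in
increasing order of position. -/
noncomputable def piPerm {n : ℕ} (σ : WDperm n) : Equiv.Perm (Fin n) :=
  if h : Function.Bijective (fun t : Fin n =>
      if ht : piVal σ (t : ℕ) < n then (⟨piVal σ (t : ℕ), ht⟩ : Fin n) else t)
  then Equiv.ofBijective _ h else 1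

/-- Apply to the crossing at `(a, c)` the nesting (`nest = true`) or disjoint (`nest = false`)
uncrossing. -/
def uncrossAt {n : ℕ} (σ : WDperm n) (a c : Fin (2 * n)) (nest : Bool) : WDperm n :=
  if nest then nestU σ a c else disjU σ a c

theorem List.lex_lt_of_mem_of_notMem {α : Type*} [LinearOrder α] {m : α} :
    ∀ {l₁ l₂ : List α}, l₁.Pairwise (· < ·) → l₂.Pairwise (· < ·) →
      l₁.length ≤ l₂.length → m ∈ l₁ → m ∉ l₂ → (∀ x < m, x ∈ l₁ ↔ x ∈ l₂) →
      List.Lex (· < ·) l₁ l₂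
  | [], _, _, _, _, hm₁, _, _ => absurd hm₁ List.not_mem_nil
  | _ :: _, [], _, _, hlen, _, _, _ => absurd hlen (by simp)
  | x :: xs, y :: ys, h₁, h₂, hlen, hm₁, hm₂, hlow => by
    rw [List.pairwise_cons] at h₁ h₂
    have hx_le : ∀ z ∈ x :: xs, x ≤ z := by grind
    have hy_le : ∀ z ∈ y :: ys, y ≤ z := by grind
    rcases (hx_le m hm₁).lt_or_eq with hxm | rfl
    · obtain rfl : x = y := by
        have hyx : y ≤ x := hy_le x ((hlow x hxm).1 List.mem_cons_self)
        have hxy : x ≤ y := hx_le y ((hlow y (hyx.trans_lt hxm)).2 List.mem_cons_self)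
        exact le_antisymm hxy hyx
      refine List.Lex.cons (List.lex_lt_of_mem_of_notMem (m := m) h₁.2 h₂.2
        (by simpa using hlen) (by grind) (by grind) fun z hz => ?_)
      have := hlow z hz
      grind
    · refine List.Lex.rel (lt_of_le_of_ne ?_ ?_)
      · by_contra! hyx
        exact absurd (hx_le y ((hlow y hyx).2 List.mem_cons_self)) hyx.not_ge
      · rintro rfl
        exact hm₂ List.mem_cons_self

theorem finsetLexLE_trans {m : ℕ} {A B C : Finset (Fin m)} (hAB : finsetLexLE A B)
    (hBC : finsetLexLE B C) : finsetLexLE A C := by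
  rcases hAB with rfl | hAB
  · exact hBC
  rcases hBC with rfl | hBC
  · exact .inr hAB
  · exact .inr (List.lex_trans lt_trans hAB hBC)

theorem finsetLexLE_insert_erase {m : ℕ} {A : Finset (Fin m)} {b c : Fin m} (hc : c ∈ A)
    (hb : b ∉ A) (hcb : c < b) : finsetLexLE A (insert b (A.erase c)) := by
  refine .inr (List.lex_lt_of_mem_of_notMem (m := c) (Finset.sortedLT_sort _).pairwise
    (Finset.sortedLT_sort _).pairwise ?_ ?_ ?_ fun x hx => ?_)
  · simp [Finset.card_insert_of_notMem (fun h => hb (Finset.mem_of_mem_erase h)),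
      Finset.card_erase_add_one hc]
  · simpa using hc
  · simpa using hcb.ne
  · simp [hx.ne, (hx.trans hcb).ne]

@[simp]
theorem mem_startSet {n : ℕ} {σ : WDperm n} {x : Fin (2 * n)} : x ∈ startSet σ ↔ x < σ x := by
  simp [startSet]

theorem startSet_nestU {n : ℕ} {σ : WDperm n} (hσ : IsWD σ) {a c : Fin (2 * n)}
    (hac : IsCrossing σ a c) : startSet (nestU σ a c) = startSet σ := by
  obtain ⟨hinv, -⟩ := hσ
  obtain ⟨hac, hcb, hbd⟩ := hac
  ext x
  simp only [mem_startSet, nestU, Perm.mul_apply, swap_apply_def]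
  split_ifs <;> grind

theorem startSet_disjU {n : ℕ} {σ : WDperm n} (hσ : IsWD σ) {a c : Fin (2 * n)}
    (hac : IsCrossing σ a c) :
    startSet (disjU σ a c) = insert (σ a) ((startSet σ).erase c) := by
  obtain ⟨hinv, -⟩ := hσ
  obtain ⟨hac, hcb, hbd⟩ := hac
  ext x
  simp only [mem_startSet, disjU, Perm.mul_apply, swap_apply_def, Finset.mem_insert,
    Finset.mem_erase]
  split_ifs <;> grind

theorem finsetLexLE_startSet_of_uncCov {n : ℕ} {σ τ : WDperm n} (hσ : IsWD σ)
    (h : UncCov σ τ) : finsetLexLE (startSet σ) (startSet τ) := by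
  rcases h.1 with ⟨a, c, hac, rfl⟩ | ⟨a, c, hac, rfl⟩
  · exact .inl (startSet_nestU hσ hac).symm
  · rw [startSet_disjU hσ hac]
    obtain ⟨h₁, h₂, h₃⟩ := hac
    refine finsetLexLE_insert_erase (mem_startSet.2 (h₂.trans h₃)) ?_ h₂
    rw [mem_startSet, hσ.1]
    exact (h₁.trans h₂).not_gt

theorem startSet_lex_monotone_general (n : ℕ) (σ τ : {σ : WDperm n // IsWD σ})
    (h : ple (some σ) (some τ)) :
    finsetLexLE (startSet σ.1) (startSet τ.1) := by
  suffices ∀ y, ple (some σ) y → y.elim True fun t => finsetLexLE (startSet σ.1) (startSet t.1)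
    from this _ h
  intro y hy
  induction hy with
  | refl => exact .inl rfl
  | @tail ρ y _ hcov ih =>
    -- `Cov none _` unfolds to `False`, so the case `ρ = none` is absent.
    match ρ, y, hcov with
    | some _, none, _ => trivial
    | some ρ, some t, hcov => exact finsetLexLE_trans ih (finsetLexLE_startSet_of_uncCov ρ.2 hcov)

/-- If `σ ≤ τ` in `P_n^*` then `S(σ) ≤lex S(τ)`. -/
theorem startSet_lex_monotone (n : ℕ) (hn : 2 ≤ n) (σ τ : {σ : WDperm n // IsWD σ})
    (h : ple (some σ) (some τ)) :
    finsetLexLE (startSet σ.1) (startSet τ.1) :=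
  startSet_lex_monotone_general n σ τ h
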